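/- arXiv:2305.19293 — 4 statements merged into one kernel-verified Lean document; each statement's English description precedes it below -/
import Mathlib

section
/- Let γ : [0,∞) → ℝ be continuous with γ(0) = 0, and let γ_e : ℝ → ℝ denote its even extension γ_e(u) = γ(|u|). For ε > 0 define W_ε(t) = (1/(8ε²)) ( ∫_t^{t+2ε} γ_e(u) du − ∫_{t−2ε}^{t} γ_e(u) du ) for t ≥ 0. Then for every τ > 0, lim_{ε→0⁺} ∫₀^τ W_ε(t) dt = (1/2) γ(τ). -/
/-
Write `f = γ ∘ |·|` and let `F`, `H` be its first and second primitives. The bracket in the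
integrand is the symmetric second difference `F(t + h) - 2F(t) + F(t - h)` with step `h = 2ε`,
and integrating it over `[0, τ]` telescopes to the second differences of `H` at `τ` and at `0`.
Since `H'' = f` is continuous, `(H(x + h) - 2H(x) + H(x - h)) / h² → f(x)`, so the integral
tends to `(f(τ) - f(0)) / 2 = γ(τ) / 2`.
-/

open Filter Asymptotics Topology Set

variable {E : Type*} [NormedAddCommGroup E] [NormedSpace ℝ E]

def symmSecondDiff (g : ℝ → E) (x h : ℝ) : E := g (x + h) - (2 : ℝ) • g x + g (x - h)

theorem hasDerivAt_symmSecondDiff_point {g g' : ℝ → E} (hg : ∀ y, HasDerivAt g (g' y) y)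
    (x h : ℝ) : HasDerivAt (fun y => symmSecondDiff g y h) (symmSecondDiff g' x h) x :=
  (((hg (x + h)).comp_add_const x h).sub ((hg x).const_smul (2 : ℝ))).add
    ((hg (x - h)).comp_sub_const x h)

theorem hasDerivAt_symmSecondDiff_step {g g' : ℝ → E} (hg : ∀ y, HasDerivAt g (g' y) y)
    (x h : ℝ) : HasDerivAt (symmSecondDiff g x) (g' (x + h) - g' (x - h)) h :=
  ((((hg (x + h)).comp_const_add x h).sub_const ((2 : ℝ) • g x)).add
    ((hg (x - h)).comp_const_sub x h)).congr_deriv (sub_eq_add_neg _ _).symm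

theorem integral_symmSecondDiff [CompleteSpace E] {G g : ℝ → E}
    (hG : ∀ y, HasDerivAt G (g y) y) (hg : Continuous g) (a b h : ℝ) :
    ∫ t in a..b, symmSecondDiff g t h = symmSecondDiff G b h - symmSecondDiff G a h := by
  refine intervalIntegral.integral_eq_sub_of_hasDerivAt
    (fun x _ => hasDerivAt_symmSecondDiff_point hG x h) (Continuous.intervalIntegrable ?_ a b)
  unfold symmSecondDiff
  fun_prop

theorem integral_sub_integral_eq_symmSecondDiff [CompleteSpace E] {F f : ℝ → E}
    (hF : ∀ y, HasDerivAt F (f y) y) (hf : Continuous f) (t h : ℝ) :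
    (∫ u in t..t + h, f u) - ∫ u in t - h..t, f u = symmSecondDiff F t h := by
  rw [intervalIntegral.integral_eq_sub_of_hasDerivAt (fun y _ => hF y) (hf.intervalIntegrable _ _),
    intervalIntegral.integral_eq_sub_of_hasDerivAt (fun y _ => hF y) (hf.intervalIntegrable _ _),
    symmSecondDiff, two_smul]
  abel

/- The remainder `φ` vanishes at `0` and `φ' = ψ` with `ψ(h) = F(x + h) - F(x - h) - 2h f(x)`,
which again vanishes at `0` and has `ψ'(h) = f(x + h) + f(x - h) - 2f(x) = o(1)`. The mean value
bound, applied twice, gives `ψ = o(h)` and then `φ = o(h²)`. -/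
theorem symmSecondDiff_sub_isLittleO {H F f : ℝ → E} (hH : ∀ y, HasDerivAt H (F y) y)
    (hF : ∀ y, HasDerivAt F (f y) y) {x : ℝ} (hf : ContinuousAt f x) :
    (fun h => symmSecondDiff H x h - h ^ 2 • f x) =o[𝓝 0] fun h => h ^ 2 := by
  have hψ_deriv : (fun h => f (x + h) + f (x - h) - (2 : ℝ) • f x) =o[𝓝[univ] 0]
      fun h => (h - 0) ^ 0 := by
    simp only [pow_zero, nhdsWithin_univ, isLittleO_one_iff]
    have hplus : ContinuousAt (fun h => f (x + h)) 0 :=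
      ContinuousAt.comp (by simpa using hf) (by fun_prop)
    have hminus : ContinuousAt (fun h => f (x - h)) 0 :=
      ContinuousAt.comp (by simpa using hf) (by fun_prop)
    have hcont : ContinuousAt (fun h => f (x + h) + f (x - h) - (2 : ℝ) • f x) 0 :=
      (hplus.add hminus).sub continuousAt_const
    simpa [two_smul] using hcont.tendsto
  have hψ := convex_univ.isLittleO_pow_succ_real (mem_univ 0)
    (f := fun h => F (x + h) - F (x - h) - (2 * h) • f x) (fun h _ => ?_) hψ_deriv
  · have hφ := convex_univ.isLittleO_pow_succ_real (mem_univ 0)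
      (f := fun h => symmSecondDiff H x h - h ^ 2 • f x) (fun h _ => ?_)
      (by simpa only [sub_zero, sub_self, zero_add, zero_smul] using hψ)
    · simpa [symmSecondDiff, two_smul] using hφ
    · refine (((hasDerivAt_symmSecondDiff_step hH x h).sub
        ((hasDerivAt_pow 2 h).smul_const (f x))).congr_deriv ?_).hasDerivWithinAt
      simp [mul_comm]
  · refine (((((hF (x + h)).comp_const_add x h).sub ((hF (x - h)).comp_const_sub x h)).sub
      (((hasDerivAt_id h).const_mul 2).smul_const (f x))).congr_deriv ?_).hasDerivWithinAt
    rw [mul_one, sub_neg_eq_add]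

theorem tendsto_symmSecondDiff_div_sq {H F f : ℝ → E} (hH : ∀ y, HasDerivAt H (F y) y)
    (hF : ∀ y, HasDerivAt F (f y) y) {x : ℝ} (hf : ContinuousAt f x) :
    Tendsto (fun h => (h ^ 2)⁻¹ • symmSecondDiff H x h) (𝓝[≠] 0) (𝓝 (f x)) := by
  have hrem : Tendsto (fun h => (h ^ 2)⁻¹ • (symmSecondDiff H x h - h ^ 2 • f x)) (𝓝[≠] 0)
      (𝓝 0) :=
    (symmSecondDiff_sub_isLittleO hH hF hf).tendsto_inv_smul_nhds_zero.mono_left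
      nhdsWithin_le_nhds
  rw [← zero_add (f x)]
  refine (hrem.add_const (f x)).congr'
    (eventually_nhdsWithin_of_forall fun h (hh : h ≠ 0) => ?_)
  rw [smul_sub, smul_smul, inv_mul_cancel₀ (pow_ne_zero 2 hh), one_smul, sub_add_cancel]

/-- Let `γ : [0,∞) → ℝ` be continuous with `γ(0) = 0`, with even extension
`γ_e(u) = γ(|u|)`, and for `ε > 0` put
`W_ε(t) = (1/(8ε²)) (∫_t^{t+2ε} γ_e - ∫_{t-2ε}^t γ_e)`. Then for every `τ > 0`,
`∫₀^τ W_ε(t) dt → (1/2) γ(τ)` as `ε → 0⁺`. -/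
theorem window_average_tendsto_half_variance
    (γ : ℝ → ℝ) (hcont : ContinuousOn γ (Set.Ici 0)) (hγ0 : γ 0 = 0)
    (τ : ℝ) (hτ : 0 < τ) :
    Tendsto
      (fun ε : ℝ => ∫ t in (0:ℝ)..τ,
        (1 / (8 * ε ^ 2)) *
          ((∫ u in t..(t + 2 * ε), γ |u|) - ∫ u in (t - 2 * ε)..t, γ |u|))
      (nhdsWithin 0 (Set.Ioi 0)) (nhds ((1 / 2) * γ τ)) := by
  set f : ℝ → ℝ := fun u => γ |u|
  have hf : Continuous f := hcont.comp_continuous continuous_abs abs_nonneg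
  set F : ℝ → ℝ := fun t => ∫ u in (0 : ℝ)..t, f u
  have hF : ∀ y, HasDerivAt F (f y) y := fun y => (hf.integral_hasStrictDerivAt 0 y).hasDerivAt
  have hFc : Continuous F := continuous_iff_continuousAt.2 fun y => (hF y).continuousAt
  set H : ℝ → ℝ := fun t => ∫ s in (0 : ℝ)..t, F s
  have hH : ∀ y, HasDerivAt H (F y) y := fun y => (hFc.integral_hasStrictDerivAt 0 y).hasDerivAt
  have hwindow : ∀ ε : ℝ, (∫ t in (0:ℝ)..τ, (1 / (8 * ε ^ 2)) *
      ((∫ u in t..(t + 2 * ε), f u) - ∫ u in (t - 2 * ε)..t, f u)) =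
      1 / 2 * (((2 * ε) ^ 2)⁻¹ * symmSecondDiff H τ (2 * ε) -
        ((2 * ε) ^ 2)⁻¹ * symmSecondDiff H 0 (2 * ε)) := by
    intro ε
    simp only [integral_sub_integral_eq_symmSecondDiff hF hf, intervalIntegral.integral_const_mul,
      integral_symmSecondDiff hH hFc]
    ring
  have hdouble : Tendsto (fun ε : ℝ => 2 * ε) (𝓝[>] 0) (𝓝[≠] 0) :=
    tendsto_nhdsWithin_of_tendsto_nhds_of_eventually_within _
      (by simpa using ((continuous_const_mul (2 : ℝ)).tendsto 0).mono_left nhdsWithin_le_nhds)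
      (eventually_nhdsWithin_of_forall fun ε (hε : 0 < ε) => by simp [hε.ne'])
  have hlim := (((tendsto_symmSecondDiff_div_sq hH hF (hf.continuousAt (x := τ))).sub
    (tendsto_symmSecondDiff_div_sq hH hF (hf.continuousAt (x := 0)))).comp hdouble).const_mul
      (1 / 2)
  simp only [Function.comp_def, smul_eq_mul, f, abs_of_pos hτ, abs_zero, hγ0, sub_zero] at hlim
  simpa only [hwindow] using hlim
end

section
/- Let G be a real process on a probability space with square-integrable centered values, G_0 = 0 a.s., covariance-stationary increments E[(G_{u+h} − G_h)(G_{v+h} − G_h)] = E[G_u G_v] for all u,v,h ≥ 0, and variance function γ(t) = E[G_t²] of the form γ(t) = ∫₀^t g(u) du with g measurable and 0 ≤ g(u) ≤ C for a.e. u ≥ 0. For ε > 0 define the trace density 𝒱̇_ε(t) = (1/(4ε²)) ∫₀^t E[(G_{t+ε} − G_{(t−ε)₊})(G_{s+ε} − G_{(s−ε)₊})] ds, where (r)₊ = max(r,0). Then for every T > 0 and every continuous function φ : [0,T] → ℝ, lim_{ε→0⁺} ∫₀^T φ(t) 𝒱̇_ε(t) dt = (1/2) ∫₀^T φ(t) g(t)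 dt; i.e. the measures 𝒱̇_ε(t) dt converge weak-star to (1/2) g(t) dt = (1/2) dγ(t). -/
/-!
Stationary increments make every increment covariance a function of the variogram
`v r = E[G_{|r|}²] = ∫₀^{|r|} g`:
`E[(G_x - G_y)(G_z - G_w)] = (v (x - w) + v (y - z) - v (x - z) - v (y - w)) / 2`.
For `t ≥ 2ε` the `s`-integral defining `𝒱̇_ε(t)` then telescopes, the contribution of
`[t - ε, t + ε]` cancelling because `v` is even, and `𝒱̇_ε(t)` becomes the average
`(ε ∫_{-ε}^{ε} g (t + r) dr + ∫_0^ε ∫_{-2ε}^0 g (t + u + w) dw du) / (8ε²)`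
of `g` against a kernel of total mass `1/2` concentrated in `[t - 2ε, t + ε]`.
By Fubini, pairing this average with `φ` gives the same average of the continuous function
`ψ r = ∫_0^T φ t g (t + r) dt`, so the pairing tends to `ψ 0 / 2`.
On `[0, 2ε]` both densities are bounded by `C`, so that piece is `O(ε)`.
-/

open MeasureTheory Filter Set Topology

namespace TraceMeasures

noncomputable def incrementCov (v : ℝ → ℝ) (x y z w : ℝ) : ℝ :=
  (v (x - w) + v (y - z) - v (x - z) - v (y - w)) / 2

-- `𝒱̇_ε(t)`, with every increment covariance written through the variogram `v`.
noncomputable def traceDensity (v : ℝ → ℝ) (ε t : ℝ) : ℝ :=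
  1 / (4 * ε ^ 2) *
    ∫ s in (0:ℝ)..t, incrementCov v (t + ε) (max (t - ε) 0) (s + ε) (max (s - ε) 0)

section Covariance

variable {Ω : Type*} [MeasurableSpace Ω] {μ : Measure Ω} {G : ℝ → Ω → ℝ}

theorem integral_mul_eq_of_stationary (hL2 : ∀ t : ℝ, 0 ≤ t → MemLp (G t) 2 μ)
    (hstat : ∀ u v h : ℝ, 0 ≤ u → 0 ≤ v → 0 ≤ h →
      ∫ ω, (G (u + h) ω - G h ω) * (G (v + h) ω - G h ω) ∂μ = ∫ ω, G u ω * G v ω ∂μ)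
    {u v : ℝ} (hu : 0 ≤ u) (hv : 0 ≤ v) :
    ∫ ω, G u ω * G v ω ∂μ =
      ((∫ ω, G |u| ω ^ 2 ∂μ) + (∫ ω, G |v| ω ^ 2 ∂μ) - ∫ ω, G |u - v| ω ^ 2 ∂μ) / 2 := by
  wlog hvu : v ≤ u generalizing u v
  · rw [abs_sub_comm, add_comm, ← this hv hu (le_of_not_ge hvu)]
    simp_rw [mul_comm]
  have hprod : ∀ {x y : ℝ}, 0 ≤ x → 0 ≤ y → Integrable (fun ω => G x ω * G y ω) μ :=
    fun hx hy => (hL2 _ hx).integrable_mul (hL2 _ hy)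
  have hsq : ∀ {x : ℝ}, 0 ≤ x → ∫ ω, G |x| ω ^ 2 ∂μ = ∫ ω, G x ω * G x ω ∂μ := fun hx => by
    simp_rw [abs_of_nonneg hx, sq]
  have hdiff : ∫ ω, (G u ω - G v ω) * (G u ω - G v ω) ∂μ = ∫ ω, G |u - v| ω ^ 2 ∂μ := by
    rw [hsq (sub_nonneg.2 hvu), ← hstat _ _ v (sub_nonneg.2 hvu) (sub_nonneg.2 hvu) hv,
      sub_add_cancel]
  have hexpand : ∫ ω, (G u ω - G v ω) * (G u ω - G v ω) ∂μ =
      (∫ ω, G u ω * G u ω ∂μ) - 2 * (∫ ω, G u ω * G v ω ∂μ) + ∫ ω, G v ω * G v ω ∂μ := by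
    simp_rw [show ∀ ω, (G u ω - G v ω) * (G u ω - G v ω) =
      G u ω * G u ω - 2 * (G u ω * G v ω) + G v ω * G v ω from fun ω => by ring]
    rw [integral_add ?_ (hprod hv hv), integral_sub (hprod hu hu) ((hprod hu hv).const_mul 2),
      integral_const_mul]
    exact (hprod hu hu).sub ((hprod hu hv).const_mul 2)
  rw [hsq hu, hsq hv]
  linarith

theorem integral_sub_mul_sub_eq_incrementCov (hL2 : ∀ t : ℝ, 0 ≤ t → MemLp (G t) 2 μ)
    (hstat : ∀ u v h : ℝ, 0 ≤ u → 0 ≤ v → 0 ≤ h →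
      ∫ ω, (G (u + h) ω - G h ω) * (G (v + h) ω - G h ω) ∂μ = ∫ ω, G u ω * G v ω ∂μ)
    {x y z w : ℝ} (hx : 0 ≤ x) (hy : 0 ≤ y) (hz : 0 ≤ z) (hw : 0 ≤ w) :
    ∫ ω, (G x ω - G y ω) * (G z ω - G w ω) ∂μ =
      incrementCov (fun r => ∫ ω, G |r| ω ^ 2 ∂μ) x y z w := by
  have hprod : ∀ {a b : ℝ}, 0 ≤ a → 0 ≤ b → Integrable (fun ω => G a ω * G b ω) μ :=
    fun ha hb => (hL2 _ ha).integrable_mul (hL2 _ hb)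
  simp_rw [show ∀ ω, (G x ω - G y ω) * (G z ω - G w ω) =
    (G x ω * G z ω - G x ω * G w ω) - (G y ω * G z ω - G y ω * G w ω) from fun ω => by ring]
  rw [integral_sub ?_ ?_, integral_sub (hprod hx hz) (hprod hx hw),
    integral_sub (hprod hy hz) (hprod hy hw)]
  · simp only [integral_mul_eq_of_stationary hL2 hstat, hx, hy, hz, hw, incrementCov]
    ring
  exacts [(hprod hx hz).sub (hprod hx hw), (hprod hy hz).sub (hprod hy hw)]

theorem traceDensity_eq_of_stationary (hL2 : ∀ t : ℝ, 0 ≤ t → MemLp (G t) 2 μ)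
    (hstat : ∀ u v h : ℝ, 0 ≤ u → 0 ≤ v → 0 ≤ h →
      ∫ ω, (G (u + h) ω - G h ω) * (G (v + h) ω - G h ω) ∂μ = ∫ ω, G u ω * G v ω ∂μ)
    {ε t : ℝ} (hε : 0 ≤ ε) (ht : 0 ≤ t) :
    traceDensity (fun r => ∫ ω, G |r| ω ^ 2 ∂μ) ε t = 1 / (4 * ε ^ 2) * ∫ s in (0:ℝ)..t,
      ∫ ω, (G (t + ε) ω - G (max (t - ε) 0) ω) * (G (s + ε) ω - G (max (s - ε) 0) ω) ∂μ := by
  rw [traceDensity]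
  congr 1
  refine intervalIntegral.integral_congr fun s hs => ?_
  rw [uIcc_of_le ht] at hs
  exact (integral_sub_mul_sub_eq_incrementCov hL2 hstat (by linarith) (le_max_right _ _)
    (by linarith [hs.1]) (le_max_right _ _)).symm

end Covariance

open intervalIntegral

noncomputable def averagedDensity (g : ℝ → ℝ) (ε x : ℝ) : ℝ :=
  1 / (8 * ε ^ 2) * (ε * (∫ r in (-ε)..ε, g (x + r)) +
    ∫ u in (0:ℝ)..ε, ∫ w in (-(2 * ε))..0, g (x + u + w))

noncomputable def evenPrimitive (g : ℝ → ℝ) (r : ℝ) : ℝ := ∫ u in (0:ℝ)..|r|, g u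

section Deterministic

variable {g v : ℝ → ℝ} {C ε : ℝ}

theorem intervalIntegrable_of_abs_le (hg : Measurable g) (hgC : ∀ x, |g x| ≤ C) (a b : ℝ) :
    IntervalIntegrable g volume a b :=
  intervalIntegrable_const.mono_fun' hg.aestronglyMeasurable
    (ae_of_all _ fun x => (Real.norm_eq_abs _).trans_le (hgC x))

theorem abs_integral_le_of_abs_le {f : ℝ → ℝ} {a b B : ℝ} (hab : a ≤ b)
    (h : ∀ x ∈ Icc a b, |f x| ≤ B) : |∫ x in a..b, f x| ≤ B * (b - a) := by
  have := norm_integral_le_of_norm_le_const (f := f) (C := B) fun x hx =>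
    (Real.norm_eq_abs _).trans_le (h x (Ioc_subset_Icc_self (uIoc_of_le hab ▸ hx)))
  rwa [Real.norm_eq_abs, abs_of_nonneg (sub_nonneg.2 hab)] at this

theorem abs_integral_sub_le_of_abs_sub_le {f : ℝ → ℝ} {a b c δ : ℝ} (hab : a ≤ b)
    (hf : IntervalIntegrable f volume a b) (h : ∀ x ∈ Icc a b, |f x - c| ≤ δ) :
    |(∫ x in a..b, f x) - (b - a) * c| ≤ δ * (b - a) := by
  have := abs_integral_le_of_abs_le hab h
  rwa [intervalIntegral.integral_sub hf intervalIntegrable_const, intervalIntegral.integral_const,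
    smul_eq_mul] at this

theorem abs_evenPrimitive_sub_le (hg : Measurable g) (hgC : ∀ x, |g x| ≤ C) (r r' : ℝ) :
    |evenPrimitive g r - evenPrimitive g r'| ≤ C * |r - r'| := by
  have hC : 0 ≤ C := (abs_nonneg _).trans (hgC 0)
  rw [evenPrimitive, evenPrimitive, integral_interval_sub_left
    (intervalIntegrable_of_abs_le hg hgC _ _) (intervalIntegrable_of_abs_le hg hgC _ _)]
  calc |∫ u in |r'|..|r|, g u| ≤ C * abs (|r| - |r'|) := by
        simpa only [Real.norm_eq_abs] using
          norm_integral_le_of_norm_le_const fun x _ => (Real.norm_eq_abs (g x)).trans_le (hgC x)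
    _ ≤ C * |r - r'| := mul_le_mul_of_nonneg_left (abs_abs_sub_abs_le_abs_sub _ _) hC

theorem continuous_evenPrimitive (hg : Measurable g) (hgC : ∀ x, |g x| ≤ C) :
    Continuous (evenPrimitive g) :=
  (continuous_primitive (intervalIntegrable_of_abs_le hg hgC) 0).comp continuous_abs

theorem evenPrimitive_sub_evenPrimitive (hg : Measurable g) (hgC : ∀ x, |g x| ≤ C)
    {x c d : ℝ} (hc : 0 ≤ x + c) (hd : 0 ≤ x + d) :
    evenPrimitive g (x + d) - evenPrimitive g (x + c) = ∫ r in c..d, g (x + r) := by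
  rw [evenPrimitive, evenPrimitive, abs_of_nonneg hc, abs_of_nonneg hd, integral_interval_sub_left
    (intervalIntegrable_of_abs_le hg hgC _ _) (intervalIntegrable_of_abs_le hg hgC _ _),
    integral_comp_add_left]

theorem continuous_integral_comp_add (hg : ∀ a b, IntervalIntegrable g volume a b) (c d : ℝ) :
    Continuous fun x => ∫ r in c..d, g (x + r) := by
  have hP := continuous_primitive hg 0
  simp_rw [integral_comp_add_left]
  refine ((hP.comp (continuous_add_const d)).sub (hP.comp (continuous_add_const c))).congr
    fun x => ?_
  exact integral_interval_sub_left (hg 0 _) (hg 0 _)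

theorem abs_incrementCov_le (hv : ∀ r r', |v r - v r'| ≤ C * |r - r'|) (x y z w : ℝ) :
    |incrementCov v x y z w| ≤ C * |z - w| := by
  have h1 := hv (x - w) (x - z)
  have h2 := hv (y - z) (y - w)
  rw [show x - w - (x - z) = z - w by ring] at h1
  rw [show y - z - (y - w) = -(z - w) by ring, abs_neg] at h2
  rw [incrementCov, abs_div, abs_two, div_le_iff₀ two_pos]
  calc |v (x - w) + v (y - z) - v (x - z) - v (y - w)|
      = |(v (x - w) - v (x - z)) + (v (y - z) - v (y - w))| := by ring_nf
    _ ≤ _ := abs_add_le _ _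
    _ ≤ C * |z - w| * 2 := by linarith

theorem abs_traceDensity_le (hv : ∀ r r', |v r - v r'| ≤ C * |r - r'|) (hε : 0 < ε)
    {t : ℝ} (ht₀ : 0 ≤ t) (ht : t ≤ 2 * ε) : |traceDensity v ε t| ≤ C := by
  have hC : 0 ≤ C := (abs_nonneg _).trans (by simpa using hv 1 0)
  have hint : |∫ s in (0:ℝ)..t, incrementCov v (t + ε) (max (t - ε) 0) (s + ε) (max (s - ε) 0)|
      ≤ C * (2 * ε) * (t - 0) :=
    abs_integral_le_of_abs_le ht₀ fun s hs => (abs_incrementCov_le hv _ _ _ _).trans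
      (mul_le_mul_of_nonneg_left (abs_le.2 ⟨by linarith [max_le (by linarith : s - ε ≤ s) hs.1],
        by linarith [le_max_left (s - ε) 0, le_max_right (s - ε) 0]⟩) hC)
  rw [traceDensity, abs_mul, abs_of_pos (by positivity : (0:ℝ) < 1 / (4 * ε ^ 2))]
  calc 1 / (4 * ε ^ 2) * |_| ≤ 1 / (4 * ε ^ 2) * (C * (2 * ε) * (2 * ε)) := by
        gcongr; exact hint.trans (by gcongr; linarith)
    _ = C := by field_simp; ring

theorem continuous_traceDensity (hv : Continuous v) (ε : ℝ) : Continuous (traceDensity v ε) := by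
  unfold traceDensity incrementCov
  exact continuous_const.mul
    (continuous_parametric_intervalIntegral_of_continuous (by fun_prop) continuous_id)

theorem integral_comp_max_sub_sub_comp_add {k : ℝ → ℝ} (hk : Continuous k) {t : ℝ}
    (hε : 0 ≤ ε) (ht : ε ≤ t) :
    ∫ s in (0:ℝ)..t, (k (max (s - ε) 0) - k (s + ε)) =
      ε * k 0 + (∫ r in (0:ℝ)..ε, k r) - ∫ r in (t - ε)..(t + ε), k r := by
  have hk' : Continuous fun s => k (max (s - ε) 0) := by fun_prop
  have hmax : ∫ s in (0:ℝ)..t, k (max (s - ε) 0) = ε * k 0 + ∫ r in (0:ℝ)..(t - ε), k r := by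
    rw [← integral_add_adjacent_intervals (b := ε) (hk'.intervalIntegrable _ _)
      (hk'.intervalIntegrable _ _)]
    congr 1
    · rw [integral_congr (g := fun _ => k 0) fun s hs => ?_, intervalIntegral.integral_const,
        smul_eq_mul, sub_zero]
      rw [uIcc_of_le hε] at hs
      simp only [max_eq_right (sub_nonpos.2 hs.2)]
    · rw [integral_congr (g := fun s => k (s - ε)) fun s hs => ?_, integral_comp_sub_right,
        sub_self]
      rw [uIcc_of_le ht] at hs
      simp only [max_eq_left (sub_nonneg.2 hs.1)]
  have hadd : ∫ s in (0:ℝ)..t, k (s + ε) = ∫ r in ε..(t + ε), k r := by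
    rw [integral_comp_add_right, zero_add]
  rw [intervalIntegral.integral_sub (hk'.intervalIntegrable _ _) ?_, hmax, hadd, add_sub_assoc,
    integral_interval_sub_interval_comm (hk.intervalIntegrable _ _) (hk.intervalIntegrable _ _)
      (hk.intervalIntegrable _ _), add_sub_assoc]
  exact (hk.comp (continuous_add_const ε)).intervalIntegrable _ _

theorem integral_sub_comp_sub_eq_zero_of_even (hv : Continuous v) (heven : ∀ r, v (-r) = v r)
    (x ε : ℝ) : ∫ r in (x - ε)..(x + ε), (v (x + ε - r) - v (x - ε - r)) = 0 := by
  rw [intervalIntegral.integral_sub ?_ ?_, integral_comp_sub_left, integral_comp_sub_left,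
    show x + ε - (x - ε) = 2 * ε by ring, show x - ε - (x + ε) = -(2 * ε) by ring,
    show x - ε - (x - ε) = -0 by ring,
    ← integral_comp_neg]
  · simp only [heven, sub_self]
  all_goals exact (hv.comp (continuous_sub_left _)).intervalIntegrable _ _

theorem traceDensity_evenPrimitive_eq_averagedDensity (hg : Measurable g) (hgC : ∀ x, |g x| ≤ C)
    (hε : 0 < ε) {t : ℝ} (ht : 2 * ε ≤ t) :
    traceDensity (evenPrimitive g) ε t = averagedDensity g ε t := by
  set v := evenPrimitive g
  have hv : Continuous v := continuous_evenPrimitive hg hgC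
  have heven : ∀ r, v (-r) = v r := fun r => by simp only [v, evenPrimitive, abs_neg]
  set k : ℝ → ℝ := fun r => v (t + ε - r) - v (t - ε - r)
  have hcov : ∀ s, incrementCov v (t + ε) (max (t - ε) 0) (s + ε) (max (s - ε) 0) =
      (k (max (s - ε) 0) - k (s + ε)) / 2 := fun s => by
    simp only [incrementCov, k, max_eq_left (by linarith : (0:ℝ) ≤ t - ε)]
    ring
  have hk0 : k 0 = ∫ r in (-ε)..ε, g (t + r) := by
    rw [← evenPrimitive_sub_evenPrimitive hg hgC (by linarith) (by linarith)]
    simp only [k, v, sub_zero, ← sub_eq_add_neg]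
  have hkint : ∫ r in (0:ℝ)..ε, k r = ∫ u in (0:ℝ)..ε, ∫ w in (-(2 * ε))..0, g (t + u + w) := by
    have hflip := integral_comp_sub_left k ε (a := 0) (b := ε)
    rw [sub_self, sub_zero] at hflip
    rw [← hflip]
    refine integral_congr fun u hu => ?_
    rw [uIcc_of_le hε.le] at hu
    rw [← evenPrimitive_sub_evenPrimitive hg hgC (by linarith [hu.1]) (by linarith [hu.1])]
    simp only [k, v]
    ring_nf
  rw [traceDensity, averagedDensity, integral_congr fun s _ => hcov s,
    intervalIntegral.integral_div,
    integral_comp_max_sub_sub_comp_add (by fun_prop) hε.le (by linarith),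
    integral_sub_comp_sub_eq_zero_of_even hv heven, hk0, hkint]
  field_simp
  ring

theorem continuous_averagedDensity (hg : Measurable g) (hgC : ∀ x, |g x| ≤ C) (ε : ℝ) :
    Continuous (averagedDensity g ε) := by
  have hint := intervalIntegrable_of_abs_le hg hgC
  unfold averagedDensity
  exact continuous_const.mul ((continuous_const.mul (continuous_integral_comp_add hint _ _)).add
    (continuous_integral_comp_add
      (continuous_integral_comp_add hint (-(2 * ε)) 0).intervalIntegrable 0 ε))

theorem abs_averagedDensity_le (hgC : ∀ x, |g x| ≤ C) (hε : 0 < ε) (x : ℝ) :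
    |averagedDensity g ε x| ≤ C / 2 := by
  have h1 : |∫ r in (-ε)..ε, g (x + r)| ≤ C * (ε - -ε) :=
    abs_integral_le_of_abs_le (by linarith) fun r _ => hgC _
  have h2 : |∫ u in (0:ℝ)..ε, ∫ w in (-(2 * ε))..0, g (x + u + w)| ≤ C * (0 - -(2 * ε)) * (ε - 0) :=
    abs_integral_le_of_abs_le hε.le fun u _ =>
      abs_integral_le_of_abs_le (by linarith) fun w _ => hgC _
  rw [averagedDensity, abs_mul, abs_of_pos (by positivity : (0:ℝ) < 1 / (8 * ε ^ 2))]
  calc 1 / (8 * ε ^ 2) * |_|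
      ≤ 1 / (8 * ε ^ 2) * (ε * (C * (ε - -ε)) + C * (0 - -(2 * ε)) * (ε - 0)) := by
        gcongr
        refine (abs_add_le _ _).trans (add_le_add ?_ h2)
        rw [abs_mul, abs_of_pos hε]
        gcongr
    _ = C / 2 := by field_simp; ring

theorem tendsto_averagedDensity {ψ : ℝ → ℝ} (hψ : Continuous ψ) (x : ℝ) :
    Tendsto (fun ε => averagedDensity ψ ε x) (𝓝[>] 0) (𝓝 (ψ x / 2)) := by
  rw [Metric.tendsto_nhdsWithin_nhds]
  intro δ hδ
  obtain ⟨ρ, hρ, hψρ⟩ := Metric.continuous_iff.1 hψ x (δ / 2) (by positivity)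
  refine ⟨ρ / 2, by positivity, fun ε (hε : 0 < ε) hερ => ?_⟩
  rw [Real.dist_eq, sub_zero, abs_of_pos hε] at hερ
  have hclose : ∀ r, |r| ≤ 2 * ε → |ψ (x + r) - ψ x| ≤ δ / 2 := fun r hr => by
    refine (hψρ (x + r) ?_).le
    rw [Real.dist_eq, add_sub_cancel_left]
    linarith
  have hS₁ : |(∫ r in (-ε)..ε, ψ (x + r)) - (ε - -ε) * ψ x| ≤ δ / 2 * (ε - -ε) :=
    abs_integral_sub_le_of_abs_sub_le (by linarith)
      ((hψ.comp (continuous_const_add x)).intervalIntegrable _ _)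
      fun r hr => hclose r (abs_le.2 ⟨by linarith [hr.1], by linarith [hr.2]⟩)
  have hS₂ : |(∫ u in (0:ℝ)..ε, ∫ w in (-(2 * ε))..0, ψ (x + u + w))
      - (ε - 0) * ((0 - -(2 * ε)) * ψ x)| ≤ δ / 2 * (0 - -(2 * ε)) * (ε - 0) := by
    have hcont : Continuous fun u => ∫ w in (-(2 * ε))..0, ψ (x + u + w) :=
      (continuous_integral_comp_add hψ.intervalIntegrable _ _).comp (continuous_const_add x)
    refine abs_integral_sub_le_of_abs_sub_le hε.le (hcont.intervalIntegrable _ _) fun u hu =>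
      abs_integral_sub_le_of_abs_sub_le (by linarith)
        ((hψ.comp (continuous_const_add _)).intervalIntegrable _ _) fun w hw => ?_
    rw [add_assoc]
    exact hclose _ (abs_le.2 ⟨by linarith [hu.1, hw.1], by linarith [hu.2, hw.2]⟩)
  have hdecomp : averagedDensity ψ ε x - ψ x / 2 = 1 / (8 * ε ^ 2) *
      (ε * ((∫ r in (-ε)..ε, ψ (x + r)) - (ε - -ε) * ψ x) +
        ((∫ u in (0:ℝ)..ε, ∫ w in (-(2 * ε))..0, ψ (x + u + w))
          - (ε - 0) * ((0 - -(2 * ε)) * ψ x))) := by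
    rw [averagedDensity]
    field_simp
    ring
  rw [Real.dist_eq, hdecomp, abs_mul, abs_of_pos (by positivity : (0:ℝ) < 1 / (8 * ε ^ 2))]
  calc 1 / (8 * ε ^ 2) * |_|
      ≤ 1 / (8 * ε ^ 2) * (ε * (δ / 2 * (ε - -ε)) + δ / 2 * (0 - -(2 * ε)) * (ε - 0)) := by
        gcongr
        refine (abs_add_le _ _).trans (add_le_add ?_ hS₂)
        rw [abs_mul, abs_of_pos hε]
        gcongr
    _ = δ / 4 := by field_simp; ring
    _ < δ := by linarith

theorem integral_mul_integral_comp_add_comm {f : ℝ → ℝ} {M a b c d : ℝ} (hf : Measurable f)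
    (hfM : ∀ x, |f x| ≤ M) (hg : Measurable g) (hgC : ∀ x, |g x| ≤ C) (hab : a ≤ b)
    (hcd : c ≤ d) :
    ∫ t in a..b, f t * ∫ r in c..d, g (t + r) = ∫ r in c..d, ∫ t in a..b, f t * g (t + r) := by
  have hint : Integrable (Function.uncurry fun t r => f t * g (t + r))
      ((volume.restrict (Ioc a b)).prod (volume.restrict (Ioc c d))) := by
    refine (integrable_const (M * C)).mono'
      ((hf.comp measurable_fst).mul
        (hg.comp (measurable_fst.add measurable_snd))).aestronglyMeasurable
      (ae_of_all _ fun p => ?_)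
    rw [Real.norm_eq_abs, Function.uncurry_apply_pair, abs_mul]
    exact mul_le_mul (hfM _) (hgC _) (abs_nonneg _) ((abs_nonneg _).trans (hfM 0))
  simp_rw [← intervalIntegral.integral_const_mul, integral_of_le hab, integral_of_le hcd]
  exact integral_integral_swap hint

theorem continuous_integral_mul_comp_add {f : ℝ → ℝ} {M : ℝ} (hf : Continuous f)
    (hfM : ∀ x, |f x| ≤ M) (hg : Measurable g) (hgC : ∀ x, |g x| ≤ C) (a b : ℝ) :
    Continuous fun r => ∫ t in a..b, f t * g (t + r) := by
  have hmeas : ∀ r, Measurable fun v => f (v - r) * g v := fun r =>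
    (hf.comp (continuous_sub_right r)).measurable.mul hg
  have hbound : ∀ r v, |f (v - r) * g v| ≤ M * C := fun r v => by
    rw [abs_mul]
    exact mul_le_mul (hfM _) (hgC _) (abs_nonneg _) ((abs_nonneg _).trans (hfM 0))
  set H : ℝ × ℝ → ℝ := fun p => ∫ v in (0:ℝ)..p.2, f (v - p.1) * g v
  have hH : Continuous H := continuous_iff_continuousAt.2 fun p =>
    continuousAt_parametric_primitive_of_dominated (fun _ => M * C) (-(|p.2| + 1)) (|p.2| + 1)
      (fun r => (hmeas r).aestronglyMeasurable)
      (Eventually.of_forall fun r =>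
        ae_of_all _ fun v => (Real.norm_eq_abs _).trans_le (hbound r v))
      intervalIntegrable_const
      (ae_of_all _ fun v => ((hf.comp (continuous_const.sub continuous_id)).mul
        continuous_const).continuousAt)
      ⟨by linarith [abs_nonneg p.2], by positivity⟩
      ⟨by linarith [neg_abs_le p.2], by linarith [le_abs_self p.2]⟩ Real.volume_singleton
  have hshift : ∀ r, ∫ t in a..b, f t * g (t + r) = H (r, b + r) - H (r, a + r) := fun r => by
    have := intervalIntegral.integral_comp_add_right (a := a) (b := b) (fun v => f (v - r) * g v) r
    simp only [add_sub_cancel_right] at this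
    rw [this, integral_interval_sub_left (intervalIntegrable_of_abs_le (hmeas r) (hbound r) _ _)
      (intervalIntegrable_of_abs_le (hmeas r) (hbound r) _ _)]
  simp_rw [hshift]
  fun_prop

theorem integral_mul_averagedDensity {φ : ℝ → ℝ} {M a b : ℝ} (hφ : Measurable φ)
    (hφM : ∀ x, |φ x| ≤ M) (hg : Measurable g) (hgC : ∀ x, |g x| ≤ C) (hab : a ≤ b)
    (hε : 0 < ε) :
    ∫ t in a..b, φ t * averagedDensity g ε t =
      averagedDensity (fun r => ∫ t in a..b, φ t * g (t + r)) ε 0 := by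
  have hint := intervalIntegrable_of_abs_le hg hgC
  have hφint := intervalIntegrable_of_abs_le hφ hφM a b
  set h : ℝ → ℝ := fun y => ∫ w in (-(2 * ε))..0, g (y + w)
  have hh : Continuous h := continuous_integral_comp_add hint _ _
  have hhC : ∀ y, |h y| ≤ C * (0 - -(2 * ε)) := fun y =>
    abs_integral_le_of_abs_le (by linarith) fun w _ => hgC _
  have hfirst : ∫ t in a..b, φ t * ∫ r in (-ε)..ε, g (t + r) =
      ∫ r in (-ε)..ε, ∫ t in a..b, φ t * g (t + r) :=
    integral_mul_integral_comp_add_comm hφ hφM hg hgC hab (by linarith)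
  have hsecond : ∫ t in a..b, φ t * ∫ u in (0:ℝ)..ε, h (t + u) =
      ∫ u in (0:ℝ)..ε, ∫ w in (-(2 * ε))..0, ∫ t in a..b, φ t * g (t + (u + w)) := by
    rw [integral_mul_integral_comp_add_comm hφ hφM hh.measurable hhC hab hε.le]
    refine integral_congr fun u _ => ?_
    simp_rw [h, ← add_assoc, add_right_comm _ u]
    exact integral_mul_integral_comp_add_comm hφ hφM (hg.comp (measurable_add_const u))
      (fun _ => hgC _) hab (by linarith)
  unfold averagedDensity
  simp only [zero_add]
  rw [← hfirst, ← hsecond, ← intervalIntegral.integral_const_mul, ← intervalIntegral.integral_add,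
    ← intervalIntegral.integral_const_mul]
  · refine integral_congr fun t _ => ?_
    ring
  · exact (hφint.mul_continuousOn
      (continuous_integral_comp_add hint _ _).continuousOn).const_mul ε
  · exact hφint.mul_continuousOn (continuous_integral_comp_add
      (hh.intervalIntegrable) _ _).continuousOn

theorem tendsto_integral_mul_averagedDensity {φ : ℝ → ℝ} {M a b : ℝ} (hφ : Continuous φ)
    (hφM : ∀ x, |φ x| ≤ M) (hg : Measurable g) (hgC : ∀ x, |g x| ≤ C) (hab : a ≤ b) :
    Tendsto (fun ε => ∫ t in a..b, φ t * averagedDensity g ε t) (𝓝[>] 0)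
      (𝓝 ((∫ t in a..b, φ t * g t) / 2)) := by
  have hlim := tendsto_averagedDensity (continuous_integral_mul_comp_add hφ hφM hg hgC a b) 0
  simp only [add_zero] at hlim
  exact hlim.congr' (eventually_nhdsWithin_of_forall fun ε hε =>
    (integral_mul_averagedDensity hφ.measurable hφM hg hgC hab hε).symm)

theorem abs_integral_mul_traceDensity_sub_le {φ : ℝ → ℝ} {M T : ℝ} (hφ : Continuous φ)
    (hφM : ∀ x, |φ x| ≤ M) (hg : Measurable g) (hgC : ∀ x, |g x| ≤ C) (hε : 0 < ε)
    (hεT : 2 * ε ≤ T) :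
    |(∫ t in (0:ℝ)..T, φ t * traceDensity (evenPrimitive g) ε t) -
        ∫ t in (0:ℝ)..T, φ t * averagedDensity g ε t| ≤ M * (C + C / 2) * (2 * ε - 0) := by
  have hV := continuous_traceDensity (continuous_evenPrimitive hg hgC) ε
  have hW := continuous_averagedDensity hg hgC ε
  have hφV : Continuous fun t => φ t * traceDensity (evenPrimitive g) ε t := by fun_prop
  have hφW : Continuous fun t => φ t * averagedDensity g ε t := by fun_prop
  have hD : Continuous fun t => φ t * traceDensity (evenPrimitive g) ε t -
      φ t * averagedDensity g ε t := by fun_prop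
  rw [← intervalIntegral.integral_sub (hφV.intervalIntegrable _ _) (hφW.intervalIntegrable _ _),
    ← integral_add_adjacent_intervals (b := 2 * ε) (hD.intervalIntegrable _ _)
      (hD.intervalIntegrable _ _),
    integral_congr (a := 2 * ε) (g := fun _ => 0) fun t ht => ?_, intervalIntegral.integral_zero,
    add_zero]
  · refine abs_integral_le_of_abs_le (by linarith) fun t ht => ?_
    rw [← mul_sub, abs_mul]
    refine mul_le_mul (hφM t) ((abs_sub _ _).trans (add_le_add ?_ ?_)) (abs_nonneg _)
      ((abs_nonneg _).trans (hφM 0))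
    · exact abs_traceDensity_le (abs_evenPrimitive_sub_le hg hgC) hε ht.1 ht.2
    · exact abs_averagedDensity_le hgC hε t
  · rw [uIcc_of_le hεT] at ht
    simp only [traceDensity_evenPrimitive_eq_averagedDensity hg hgC hε ht.1, sub_self]

theorem tendsto_integral_mul_traceDensity {φ : ℝ → ℝ} {M T : ℝ} (hφ : Continuous φ)
    (hφM : ∀ x, |φ x| ≤ M) (hg : Measurable g) (hgC : ∀ x, |g x| ≤ C) (hT : 0 < T) :
    Tendsto (fun ε => ∫ t in (0:ℝ)..T, φ t * traceDensity (evenPrimitive g) ε t) (𝓝[>] 0)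
      (𝓝 ((∫ t in (0:ℝ)..T, φ t * g t) / 2)) := by
  have hdiff : Tendsto (fun ε => (∫ t in (0:ℝ)..T, φ t * traceDensity (evenPrimitive g) ε t) -
      ∫ t in (0:ℝ)..T, φ t * averagedDensity g ε t) (𝓝[>] 0) (𝓝 0) := by
    refine squeeze_zero_norm' ?_ (tendsto_nhdsWithin_of_tendsto_nhds
      ((Continuous.tendsto' (by fun_prop) 0 0 (by simp)) :
        Tendsto (fun ε : ℝ => M * (C + C / 2) * (2 * ε - 0)) (𝓝 0) (𝓝 0)))
    filter_upwards [Ioo_mem_nhdsGT (half_pos hT)] with ε hε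
    exact abs_integral_mul_traceDensity_sub_le hφ hφM hg hgC hε.1 (by linarith [hε.2])
  simpa using hdiff.add (tendsto_integral_mul_averagedDensity hφ hφM hg hgC hT.le)

end Deterministic

theorem exists_measurable_abs_le_ae_eq {α : Type*} [MeasurableSpace α] {μ : Measure α}
    (hμ : μ ≠ 0) {g : α → ℝ} {C : ℝ} (hg : Measurable g) (hgC : ∀ᵐ x ∂μ, |g x| ≤ C) :
    ∃ g' : α → ℝ, Measurable g' ∧ (∀ x, |g' x| ≤ C) ∧ g =ᵐ[μ] g' := by
  have : (ae μ).NeBot := ae_neBot.2 hμ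
  have hC : 0 ≤ C := by
    obtain ⟨x, hx⟩ := hgC.exists
    exact (abs_nonneg _).trans hx
  refine ⟨fun x => max (-C) (min (g x) C), measurable_const.max (hg.min measurable_const),
    fun x => abs_le.2 ⟨le_max_left _ _, max_le (by linarith) (min_le_right _ _)⟩, ?_⟩
  filter_upwards [hgC] with x hx
  rw [min_eq_left (abs_le.1 hx).2, max_eq_right (abs_le.1 hx).1]

theorem exists_continuous_abs_le_eqOn_Icc {φ : ℝ → ℝ} {a b : ℝ} (hab : a ≤ b)
    (hφ : ContinuousOn φ (Icc a b)) :
    ∃ φ' : ℝ → ℝ, Continuous φ' ∧ (∃ M, ∀ x, |φ' x| ≤ M) ∧ EqOn φ' φ (Icc a b) := by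
  obtain ⟨M, hM⟩ := isCompact_Icc.exists_bound_of_continuousOn hφ
  refine ⟨fun x => φ (projIcc a b hab x),
    hφ.comp_continuous (continuous_subtype_val.comp continuous_projIcc)
      fun x => (projIcc a b hab x).2,
    ⟨M, fun x => hM _ (projIcc a b hab x).2⟩, fun x hx => ?_⟩
  simp only [projIcc_of_mem hab hx]

end TraceMeasures

open TraceMeasures in
theorem trace_measures_weakStar_convergence_general
    {Ω : Type*} [MeasurableSpace Ω] (μ : Measure Ω)
    (G : ℝ → Ω → ℝ)
    (hL2 : ∀ t : ℝ, 0 ≤ t → MemLp (G t) 2 μ)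
    (hstat : ∀ u v h : ℝ, 0 ≤ u → 0 ≤ v → 0 ≤ h →
      ∫ ω, (G (u + h) ω - G h ω) * (G (v + h) ω - G h ω) ∂μ = ∫ ω, G u ω * G v ω ∂μ)
    (g : ℝ → ℝ) (C : ℝ) (hgmeas : Measurable g)
    (hg : ∀ᵐ u ∂(volume.restrict (Set.Ici (0:ℝ))), 0 ≤ g u ∧ g u ≤ C)
    (hγ : ∀ t : ℝ, 0 ≤ t → ∫ ω, (G t ω) ^ 2 ∂μ = ∫ u in (0:ℝ)..t, g u)
    (T : ℝ) (hT : 0 < T) (φ : ℝ → ℝ) (hφ : ContinuousOn φ (Set.Icc 0 T)) :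
    Tendsto
      (fun ε : ℝ => ∫ t in (0:ℝ)..T, φ t *
        ((1 / (4 * ε ^ 2)) * ∫ s in (0:ℝ)..t,
          ∫ ω, (G (t + ε) ω - G (max (t - ε) 0) ω) * (G (s + ε) ω - G (max (s - ε) 0) ω) ∂μ))
      (nhdsWithin 0 (Set.Ioi 0))
      (nhds ((1 / 2) * ∫ t in (0:ℝ)..T, φ t * g t)) := by
  obtain ⟨g', hg'm, hg'C, hgg'⟩ := exists_measurable_abs_le_ae_eq (by simp) hgmeas
    (hg.mono fun u hu => abs_le.2 ⟨by linarith [hu.1, hu.2], hu.2⟩)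
  have hgg'₀ : ∀ {b : ℝ}, 0 ≤ b → ∀ᵐ u, u ∈ uIoc 0 b → g u = g' u := fun hb => by
    filter_upwards [(ae_restrict_iff' measurableSet_Ici).1 hgg'] with u hu hub
    exact hu (uIoc_of_le hb ▸ hub).1.le
  obtain ⟨φ', hφ'c, ⟨M, hφ'M⟩, hφφ'⟩ := exists_continuous_abs_le_eqOn_Icc hT.le hφ
  have hvariogram : (fun r => ∫ ω, G |r| ω ^ 2 ∂μ) = evenPrimitive g' := funext fun r => by
    rw [hγ _ (abs_nonneg r), evenPrimitive]
    exact intervalIntegral.integral_congr_ae (hgg'₀ (abs_nonneg r))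
  have hlimit : ∫ t in (0:ℝ)..T, φ t * g t = ∫ t in (0:ℝ)..T, φ' t * g' t := by
    refine intervalIntegral.integral_congr_ae ((hgg'₀ hT.le).mono fun t ht htT => ?_)
    rw [ht htT, hφφ' (Ioc_subset_Icc_self (uIoc_of_le hT.le ▸ htT))]
  rw [hlimit, one_div_mul_eq_div]
  refine (tendsto_integral_mul_traceDensity hφ'c hφ'M hg'm hg'C hT).congr'
    (eventually_nhdsWithin_of_forall fun ε (hε : 0 < ε) => intervalIntegral.integral_congr
      fun t ht => ?_)
  rw [uIcc_of_le hT.le] at ht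
  rw [hφφ' ht, ← hvariogram, traceDensity_eq_of_stationary hL2 hstat hε.le ht.1]

/-- Weak-star convergence of the trace measures: for a centered, square-integrable
process `G` with `G₀ = 0`, covariance-stationary increments and variance function
`γ(t) = ∫₀^t g` with `0 ≤ g ≤ C`, the trace densities
`𝒱̇_ε(t) = (1/(4ε²)) ∫₀^t E[(G_{t+ε} - G_{(t-ε)₊})(G_{s+ε} - G_{(s-ε)₊})] ds`
satisfy `∫₀^T φ 𝒱̇_ε → (1/2) ∫₀^T φ g` as `ε → 0⁺`, for every `T > 0` and every
continuous `φ : [0,T] → ℝ`. -/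
theorem trace_measures_weakStar_convergence
    {Ω : Type*} [MeasurableSpace Ω] (μ : Measure Ω) [IsProbabilityMeasure μ]
    (G : ℝ → Ω → ℝ)
    (hL2 : ∀ t : ℝ, 0 ≤ t → MemLp (G t) 2 μ)
    (hcent : ∀ t : ℝ, 0 ≤ t → ∫ ω, G t ω ∂μ = 0)
    (hzero : ∀ᵐ ω ∂μ, G 0 ω = 0)
    (hstat : ∀ u v h : ℝ, 0 ≤ u → 0 ≤ v → 0 ≤ h →
      ∫ ω, (G (u + h) ω - G h ω) * (G (v + h) ω - G h ω) ∂μ = ∫ ω, G u ω * G v ω ∂μ)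
    (g : ℝ → ℝ) (C : ℝ) (hgmeas : Measurable g)
    (hg : ∀ᵐ u ∂(volume.restrict (Set.Ici (0:ℝ))), 0 ≤ g u ∧ g u ≤ C)
    (hγ : ∀ t : ℝ, 0 ≤ t → ∫ ω, (G t ω) ^ 2 ∂μ = ∫ u in (0:ℝ)..t, g u)
    (T : ℝ) (hT : 0 < T) (φ : ℝ → ℝ) (hφ : ContinuousOn φ (Set.Icc 0 T)) :
    Tendsto
      (fun ε : ℝ => ∫ t in (0:ℝ)..T, φ t *
        ((1 / (4 * ε ^ 2)) * ∫ s in (0:ℝ)..t,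
          ∫ ω, (G (t + ε) ω - G (max (t - ε) 0) ω) * (G (s + ε) ω - G (max (s - ε) 0) ω) ∂μ))
      (nhdsWithin 0 (Set.Ioi 0))
      (nhds ((1 / 2) * ∫ t in (0:ℝ)..T, φ t * g t)) :=
  trace_measures_weakStar_convergence_general μ G hL2 hstat g C hgmeas hg hγ T hT φ hφ
end

section
/- Let T > 0, c, a, b ∈ ℂ, C > 0. Let g_ε (for ε in a sequence tending to 0) and g be measurable functions from [0,T] to [0,C] such that ∫₀^T φ(t) g_ε(t) dt → ∫₀^T φ(t) g(t) dt for every continuous φ : [0,T] → ℝ. Suppose e_ε : [0,T] → ℂ are continuous, satisfy e_ε(t) = c + a ∫₀^t e_ε(s) ds + b ∫₀^t e_ε(s) g_ε(s) ds for all t ∈ [0,T], and converge uniformly on [0,T] to a function e. Then e is continuous and satisfies the limit equation e(t) = c + a ∫₀^t e(s) ds + b ∫₀^t e(s) g(s) ds for all t ∈ [0,T]. -/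
/-!
Uniform convergence of `eε` gives the continuity of `e` and the convergence of `∫₀ᵗ eε`, and it
reduces `∫₀ᵗ eε gε` to `∫₀ᵗ e gε` up to an error `C t sup |eε - e|`. The weak-star hypothesis only
tests against continuous functions on the whole of `[0, T]`; it is localized to `[0, t]` with a
continuous cutoff equal to `1` up to `t - δ` and to `0` from `t` on, which changes the integrals
`∫ φ gε` and `∫ φ g` by at most `C δ sup |φ|`, uniformly in `ε` since the densities are bounded by
`C`. Letting `ε → 0` in the equation for `eε` then gives the equation for `e`.
-/

open MeasureTheory Filter Set Topology Interval

theorem tendsto_of_forall_approx {ι α : Type*} [PseudoMetricSpace α] {l : Filter ι}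
    {u : ι → α} {x : α}
    (h : ∀ ε > 0, ∃ v : ι → α, ∃ y, Tendsto v l (𝓝 y) ∧ (∀ᶠ i in l, dist (u i) (v i) ≤ ε) ∧
      dist x y ≤ ε) :
    Tendsto u l (𝓝 x) := by
  refine Metric.tendsto_nhds.mpr fun ε hε => ?_
  obtain ⟨v, y, hv, huv, hxy⟩ := h (ε / 4) (by positivity)
  filter_upwards [huv, Metric.tendsto_nhds.mp hv (ε / 4) (by positivity)] with i hi hvi
  calc dist (u i) x ≤ dist (u i) (v i) + dist (v i) y + dist y x := dist_triangle4 _ _ _ _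
    _ < ε := by rw [dist_comm y x]; linarith

theorem intervalIntegrable_of_norm_le {f : ℝ → ℝ} {a b C : ℝ} (hab : a ≤ b)
    (hf : Measurable f) (hC : ∀ s ∈ Icc a b, ‖f s‖ ≤ C) : IntervalIntegrable f volume a b :=
  (intervalIntegrable_iff_integrableOn_Icc_of_le hab).mpr <|
    Measure.integrableOn_of_bounded measure_Icc_lt_top.ne hf.aestronglyMeasurable
      ((ae_restrict_iff' measurableSet_Icc).mpr (ae_of_all _ hC))

theorem IntervalIntegrable.ofReal {f : ℝ → ℝ} {a b : ℝ} {μ : Measure ℝ}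
    (hf : IntervalIntegrable f μ a b) : IntervalIntegrable (fun s => (f s : ℂ)) μ a b :=
  ⟨hf.1.ofReal, hf.2.ofReal⟩

theorem intervalIntegral_mul_ofReal_eq_re_add_im {φ : ℝ → ℂ} {h : ℝ → ℝ} {a b : ℝ}
    (hφ : ContinuousOn φ [[a, b]]) (hh : IntervalIntegrable h volume a b) :
    ∫ s in a..b, φ s * h s =
      (∫ s in a..b, (φ s).re * h s : ℝ) + (∫ s in a..b, (φ s).im * h s : ℝ) * Complex.I := by
  have hre : IntervalIntegrable (fun s => (((φ s).re * h s : ℝ) : ℂ)) volume a b :=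
    (hh.continuousOn_mul (Complex.continuous_re.comp_continuousOn hφ)).ofReal
  have him : IntervalIntegrable (fun s => (((φ s).im * h s : ℝ) : ℂ)) volume a b :=
    (hh.continuousOn_mul (Complex.continuous_im.comp_continuousOn hφ)).ofReal
  rw [← intervalIntegral.integral_ofReal, ← intervalIntegral.integral_ofReal,
    ← intervalIntegral.integral_mul_const, ← intervalIntegral.integral_add hre (him.mul_const _)]
  refine intervalIntegral.integral_congr fun s _ => Complex.ext ?_ ?_ <;> simp

section Cutoff

variable {E : Type*} [NormedAddCommGroup E] [NormedSpace ℝ E] {F : ℝ → E} {ψ : ℝ → ℝ}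
  {a b t δ K : ℝ}

theorem norm_intervalIntegral_sub_smul_le (hat : a ≤ t) (hδ : 0 ≤ δ)
    (hF : IntervalIntegrable F volume a t) (hFK : ∀ s ∈ Icc a t, ‖F s‖ ≤ K)
    (hψ : Continuous ψ) (hψ01 : ∀ s, ψ s ∈ Icc 0 1) (hψ1 : EqOn ψ 1 (Iic (t - δ))) :
    ‖∫ s in a..t, F s - ψ s • F s‖ ≤ K * δ := by
  set t₀ := max (t - δ) a
  have hat₀ : a ≤ t₀ := le_max_right _ _
  have ht₀t : t₀ ≤ t := max_le (by linarith) hat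
  have hG := hF.sub (hF.continuousOn_smul hψ.continuousOn)
  have hleft : ‖∫ s in a..t₀, F s - ψ s • F s‖ ≤ 0 * |t₀ - a| := by
    refine intervalIntegral.norm_integral_le_of_norm_le_const fun s hs => ?_
    rw [uIoc_of_le hat₀] at hs
    have hs' : s ≤ t - δ := (le_max_iff.mp hs.2).resolve_right hs.1.not_ge
    simp [hψ1 hs']
  have hright : ‖∫ s in t₀..t, F s - ψ s • F s‖ ≤ K * |t - t₀| := by
    refine intervalIntegral.norm_integral_le_of_norm_le_const fun s hs => ?_
    rw [uIoc_of_le ht₀t] at hs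
    have h1ψ : ‖1 - ψ s‖ ≤ 1 := by
      rw [Real.norm_eq_abs, abs_le]; constructor <;> linarith [(hψ01 s).1, (hψ01 s).2]
    calc ‖F s - ψ s • F s‖ = ‖1 - ψ s‖ * ‖F s‖ := by rw [← norm_smul, sub_smul, one_smul]
      _ ≤ 1 * K := mul_le_mul h1ψ (hFK s ⟨hat₀.trans hs.1.le, hs.2⟩) (norm_nonneg _) zero_le_one
      _ = K := one_mul K
  have hK : 0 ≤ K := (norm_nonneg _).trans (hFK t ⟨hat, le_rfl⟩)
  have hδ' : |t - t₀| ≤ δ := by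
    rw [abs_of_nonneg (sub_nonneg.mpr ht₀t)]; linarith [le_max_left (t - δ) a]
  rw [← intervalIntegral.integral_add_adjacent_intervals
    (hG.mono_set (uIcc_subset_uIcc left_mem_uIcc (mem_uIcc_of_le hat₀ ht₀t)))
    (hG.mono_set (uIcc_subset_uIcc (mem_uIcc_of_le hat₀ ht₀t) right_mem_uIcc))]
  calc _ ≤ ‖∫ s in a..t₀, F s - ψ s • F s‖ + ‖∫ s in t₀..t, F s - ψ s • F s‖ := norm_add_le _ _
    _ ≤ K * δ := by nlinarith

theorem norm_intervalIntegral_sub_cutoff_smul_le (ht : t ∈ Icc a b) (hδ : 0 ≤ δ)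
    (hF : IntervalIntegrable F volume a b) (hFK : ∀ s ∈ Icc a b, ‖F s‖ ≤ K)
    (hψ : Continuous ψ) (hψ01 : ∀ s, ψ s ∈ Icc 0 1)
    (hψ1 : EqOn ψ 1 (Iic (t - δ))) (hψ0 : EqOn ψ 0 (Ici t)) :
    ‖(∫ s in a..t, F s) - ∫ s in a..b, ψ s • F s‖ ≤ K * δ := by
  obtain ⟨hat, htb⟩ := ht
  have hψF := hF.continuousOn_smul hψ.continuousOn
  have hleft : [[a, t]] ⊆ [[a, b]] := uIcc_subset_uIcc left_mem_uIcc (mem_uIcc_of_le hat htb)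
  have hright : [[t, b]] ⊆ [[a, b]] := uIcc_subset_uIcc (mem_uIcc_of_le hat htb) right_mem_uIcc
  have htail : ∫ s in t..b, ψ s • F s = 0 := by
    rw [intervalIntegral.integral_congr (g := fun _ => 0) fun s hs => ?_,
      intervalIntegral.integral_zero]
    rw [uIcc_of_le htb] at hs
    simp [hψ0 (mem_Ici.mpr hs.1)]
  rw [← intervalIntegral.integral_add_adjacent_intervals (hψF.mono_set hleft)
    (hψF.mono_set hright), htail, add_zero,
    ← intervalIntegral.integral_sub (hF.mono_set hleft) (hψF.mono_set hleft)]
  exact norm_intervalIntegral_sub_smul_le hat hδ (hF.mono_set hleft)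
    (fun s hs => hFK s ⟨hs.1, hs.2.trans htb⟩) hψ hψ01 hψ1

end Cutoff

section WeakStar

variable {ι : Type*} {l : Filter ι} {g : ι → ℝ → ℝ} {g₀ : ℝ → ℝ} {a b C : ℝ}

theorem tendsto_intervalIntegral_mul_ofReal_of_weakStar (hab : a ≤ b)
    (hg : ∀ i, IntervalIntegrable (g i) volume a b) (hg₀ : IntervalIntegrable g₀ volume a b)
    (hweak : ∀ φ : ℝ → ℝ, ContinuousOn φ (Icc a b) →
      Tendsto (fun i => ∫ s in a..b, φ s * g i s) l (𝓝 (∫ s in a..b, φ s * g₀ s)))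
    {φ : ℝ → ℂ} (hφ : ContinuousOn φ (Icc a b)) :
    Tendsto (fun i => ∫ s in a..b, φ s * g i s) l (𝓝 (∫ s in a..b, φ s * g₀ s)) := by
  have hφ' : ContinuousOn φ [[a, b]] := by rwa [uIcc_of_le hab]
  have hsplit := fun i => intervalIntegral_mul_ofReal_eq_re_add_im hφ' (hg i)
  rw [funext hsplit, intervalIntegral_mul_ofReal_eq_re_add_im hφ' hg₀]
  have hre := hweak _ (Complex.continuous_re.comp_continuousOn hφ)
  have him := hweak _ (Complex.continuous_im.comp_continuousOn hφ)
  exact ((Complex.continuous_ofReal.tendsto _).comp hre).add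
    (((Complex.continuous_ofReal.tendsto _).comp him).mul_const _)

theorem tendsto_intervalIntegral_mul_ofReal_of_weakStar_of_mem_Icc
    (hg : ∀ i, IntervalIntegrable (g i) volume a b) (hg₀ : IntervalIntegrable g₀ volume a b)
    (hgC : ∀ i, ∀ s ∈ Icc a b, ‖g i s‖ ≤ C) (hg₀C : ∀ s ∈ Icc a b, ‖g₀ s‖ ≤ C)
    (hweak : ∀ φ : ℝ → ℂ, ContinuousOn φ (Icc a b) →
      Tendsto (fun i => ∫ s in a..b, φ s * g i s) l (𝓝 (∫ s in a..b, φ s * g₀ s)))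
    {φ : ℝ → ℂ} (hφ : ContinuousOn φ (Icc a b)) {t : ℝ} (ht : t ∈ Icc a b) :
    Tendsto (fun i => ∫ s in a..t, φ s * g i s) l (𝓝 (∫ s in a..t, φ s * g₀ s)) := by
  obtain ⟨M, hM⟩ := isCompact_Icc.exists_bound_of_continuousOn hφ
  have hφ' : ContinuousOn φ [[a, b]] := by rwa [uIcc_of_le (ht.1.trans ht.2)]
  refine tendsto_of_forall_approx fun ε hε => ?_
  set δ := ε / (|M * C| + 1)
  have hδ : 0 < δ := by positivity
  have hKδ : M * C * δ ≤ ε := by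
    calc M * C * δ ≤ |M * C| * δ := by gcongr; exact le_abs_self _
      _ ≤ (|M * C| + 1) * δ := by gcongr; linarith
      _ = ε := mul_div_cancel₀ _ (by positivity)
  obtain ⟨ψ, hψ0, hψ1, hψ01⟩ := exists_continuous_zero_one_of_isClosed isClosed_Ici isClosed_Iic
    (Ici_disjoint_Iic.mpr (by linarith) : Disjoint (Ici t) (Iic (t - δ)))
  have hcut : ∀ h : ℝ → ℝ, IntervalIntegrable h volume a b → (∀ s ∈ Icc a b, ‖h s‖ ≤ C) →
      dist (∫ s in a..t, φ s * h s) (∫ s in a..b, (ψ s • φ s) * h s) ≤ ε := fun h hh hhC => by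
    simp_rw [dist_eq_norm, smul_mul_assoc]
    refine (norm_intervalIntegral_sub_cutoff_smul_le ht hδ.le (hh.ofReal.continuousOn_mul hφ')
      (fun s hs => ?_) ψ.continuous hψ01 hψ1 hψ0).trans hKδ
    rw [norm_mul, Complex.norm_real]
    exact mul_le_mul (hM s hs) (hhC s hs) (norm_nonneg _) ((norm_nonneg _).trans (hM s hs))
  exact ⟨_, _, hweak _ (ψ.continuous.continuousOn.smul hφ),
    Eventually.of_forall fun i => hcut _ (hg i) (hgC i), hcut _ hg₀ hg₀C⟩

end WeakStar

section UniformLimit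

variable {ι : Type*} {l : Filter ι} {F : ι → ℝ → ℂ} {f : ℝ → ℂ} {h : ι → ℝ → ℝ} {a b C : ℝ}

theorem tendsto_intervalIntegral_sub_mul_of_tendstoUniformlyOn
    (hF : TendstoUniformlyOn F f l [[a, b]]) (hC : ∀ i, ∀ s ∈ [[a, b]], ‖h i s‖ ≤ C) :
    Tendsto (fun i => ∫ s in a..b, (F i s - f s) * h i s) l (𝓝 0) := by
  refine Metric.tendsto_nhds.mpr fun ε hε => ?_
  set K := |C| * |b - a|
  have hη : 0 < ε / (K + 1) := by positivity
  filter_upwards [Metric.tendstoUniformlyOn_iff.mp hF _ hη] with i hi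
  rw [dist_zero_right]
  calc ‖∫ s in a..b, (F i s - f s) * h i s‖ ≤ ε / (K + 1) * |C| * |b - a| :=
        intervalIntegral.norm_integral_le_of_norm_le_const fun s hs => by
          have hs' := uIoc_subset_uIcc hs
          rw [norm_mul, Complex.norm_real, ← dist_eq_norm, dist_comm]
          exact mul_le_mul (hi s hs').le ((hC i s hs').trans (le_abs_self C)) (norm_nonneg _)
            hη.le
    _ = ε * (K / (K + 1)) := by ring
    _ < ε := mul_lt_of_lt_one_right hε ((div_lt_one (by positivity)).mpr (lt_add_one K))

theorem tendsto_intervalIntegral_mul_of_tendstoUniformlyOn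
    (hF : TendstoUniformlyOn F f l [[a, b]]) (hFc : ∀ i, ContinuousOn (F i) [[a, b]])
    (hfc : ContinuousOn f [[a, b]]) (hh : ∀ i, IntervalIntegrable (h i) volume a b)
    (hC : ∀ i, ∀ s ∈ [[a, b]], ‖h i s‖ ≤ C) {L : ℂ}
    (hlim : Tendsto (fun i => ∫ s in a..b, f s * h i s) l (𝓝 L)) :
    Tendsto (fun i => ∫ s in a..b, F i s * h i s) l (𝓝 L) := by
  have hsum := (tendsto_intervalIntegral_sub_mul_of_tendstoUniformlyOn hF hC).add hlim
  rw [zero_add] at hsum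
  refine hsum.congr fun i => ?_
  have hh' := (hh i).ofReal
  rw [← intervalIntegral.integral_add
    (hh'.continuousOn_mul (g := fun s => F i s - f s) ((hFc i).sub hfc))
    (hh'.continuousOn_mul hfc)]
  simp_rw [sub_mul, sub_add_cancel]

end UniformLimit

theorem volterra_stability_weakStar_general
    (T : ℝ) (c a b : ℂ) (C : ℝ)
    (gε : ℕ → ℝ → ℝ) (g : ℝ → ℝ)
    (hgεmeas : ∀ n, Measurable (gε n)) (hgmeas : Measurable g)
    (hgεbound : ∀ n, ∀ t ∈ Set.Icc (0:ℝ) T, gε n t ∈ Set.Icc (0:ℝ) C)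
    (hgbound : ∀ t ∈ Set.Icc (0:ℝ) T, g t ∈ Set.Icc (0:ℝ) C)
    (hweak : ∀ φ : ℝ → ℝ, ContinuousOn φ (Set.Icc 0 T) →
      Tendsto (fun n => ∫ t in (0:ℝ)..T, φ t * gε n t) atTop
        (nhds (∫ t in (0:ℝ)..T, φ t * g t)))
    (eε : ℕ → ℝ → ℂ) (e : ℝ → ℂ)
    (heεcont : ∀ n, ContinuousOn (eε n) (Set.Icc 0 T))
    (heεeq : ∀ n, ∀ t ∈ Set.Icc (0:ℝ) T,
      eε n t = c + a * (∫ s in (0:ℝ)..t, eε n s)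
        + b * ∫ s in (0:ℝ)..t, eε n s * (gε n s : ℂ))
    (hunif : TendstoUniformlyOn eε e atTop (Set.Icc 0 T)) :
    ContinuousOn e (Set.Icc 0 T) ∧
    ∀ t ∈ Set.Icc (0:ℝ) T,
      e t = c + a * (∫ s in (0:ℝ)..t, e s)
        + b * ∫ s in (0:ℝ)..t, e s * (g s : ℂ) := by
  have he : ContinuousOn e (Icc 0 T) := hunif.continuousOn (.of_forall heεcont)
  refine ⟨he, fun t ht => tendsto_nhds_unique (hunif.tendsto_at ht) ?_⟩
  have hT : 0 ≤ T := ht.1.trans ht.2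
  have hgεC n s hs : ‖gε n s‖ ≤ C :=
    (Real.norm_of_nonneg (hgεbound n s hs).1).trans_le (hgεbound n s hs).2
  have hgC s hs : ‖g s‖ ≤ C := (Real.norm_of_nonneg (hgbound s hs).1).trans_le (hgbound s hs).2
  have hgε n := intervalIntegrable_of_norm_le hT (hgεmeas n) (hgεC n)
  have hg := intervalIntegrable_of_norm_le hT hgmeas hgC
  have hsub : [[0, t]] ⊆ Icc 0 T := by rw [uIcc_of_le ht.1]; exact Icc_subset_Icc_right ht.2
  have hlin : Tendsto (fun n => ∫ s in 0..t, eε n s) atTop (𝓝 (∫ s in 0..t, e s)) :=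
    (hunif.mono hsub).tendsto_intervalIntegral_of_continuousOn
      (.of_forall fun n => (heεcont n).mono hsub)
  have hdens : Tendsto (fun n => ∫ s in 0..t, eε n s * gε n s) atTop
      (𝓝 (∫ s in 0..t, e s * g s)) :=
    tendsto_intervalIntegral_mul_of_tendstoUniformlyOn (hunif.mono hsub)
      (fun n => (heεcont n).mono hsub) (he.mono hsub)
      (fun n => (hgε n).mono_set (by rwa [uIcc_of_le hT]))
      (fun n s hs => hgεC n s (hsub hs))
      (tendsto_intervalIntegral_mul_ofReal_of_weakStar_of_mem_Icc hgε hg hgεC hgC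
        (fun _ hφ => tendsto_intervalIntegral_mul_ofReal_of_weakStar hT hgε hg hweak hφ) he ht)
  exact ((tendsto_const_nhds.add (hlin.const_mul a)).add (hdens.const_mul b)).congr
    fun n => (heεeq n t ht).symm

/-- Stability of the linear Volterra equation under weak-star convergence of the
densities: if `gₙ, g : [0,T] → [0,C]` with `∫₀^T φ gₙ → ∫₀^T φ g` for every
continuous `φ`, and the continuous solutions `eₙ` of
`eₙ(t) = c + a ∫₀^t eₙ + b ∫₀^t eₙ gₙ` converge uniformly to `e` on `[0,T]`, then
`e` is continuous and solves `e(t) = c + a ∫₀^t e + b ∫₀^t e g` on `[0,T]`. -/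
theorem volterra_stability_weakStar
    (T : ℝ) (hT : 0 < T) (c a b : ℂ) (C : ℝ) (hC : 0 < C)
    (gε : ℕ → ℝ → ℝ) (g : ℝ → ℝ)
    (hgεmeas : ∀ n, Measurable (gε n)) (hgmeas : Measurable g)
    (hgεbound : ∀ n, ∀ t ∈ Set.Icc (0:ℝ) T, gε n t ∈ Set.Icc (0:ℝ) C)
    (hgbound : ∀ t ∈ Set.Icc (0:ℝ) T, g t ∈ Set.Icc (0:ℝ) C)
    (hweak : ∀ φ : ℝ → ℝ, ContinuousOn φ (Set.Icc 0 T) →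
      Tendsto (fun n => ∫ t in (0:ℝ)..T, φ t * gε n t) atTop
        (nhds (∫ t in (0:ℝ)..T, φ t * g t)))
    (eε : ℕ → ℝ → ℂ) (e : ℝ → ℂ)
    (heεcont : ∀ n, ContinuousOn (eε n) (Set.Icc 0 T))
    (heεeq : ∀ n, ∀ t ∈ Set.Icc (0:ℝ) T,
      eε n t = c + a * (∫ s in (0:ℝ)..t, eε n s)
        + b * ∫ s in (0:ℝ)..t, eε n s * (gε n s : ℂ))
    (hunif : TendstoUniformlyOn eε e atTop (Set.Icc 0 T)) :
    ContinuousOn e (Set.Icc 0 T) ∧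
    ∀ t ∈ Set.Icc (0:ℝ) T,
      e t = c + a * (∫ s in (0:ℝ)..t, e s)
        + b * ∫ s in (0:ℝ)..t, e s * (g s : ℂ) :=
  volterra_stability_weakStar_general T c a b C gε g hgεmeas hgmeas hgεbound hgbound hweak eε e
    heεcont heεeq hunif
end

section
/- Let κ ≥ 0, K finite, σ_k ∈ ℝ² for k ∈ K, σ²(ξ) = Σ_k ⟨σ_k,ξ⟩², ρ(ξ,η) = Σ_k ⟨σ_k,ξ⟩⟨σ_k,η⟩, let g : [0,∞) → [0,C] be measurable with γ(t) = ∫₀^t g, and let θ̂₀ : ℝ² → ℂ. Define e(t,ξ) = θ̂₀(ξ) exp(−κ‖ξ‖²t − (1/2)σ²(ξ)γ(t)) and the covariance function C(t,ξ,η) = θ̂₀(ξ) \overline{θ̂₀(η)} · exp(−κ(‖ξ‖²+‖η‖²)t) · ( exp(−(1/2)σ²(ξ−η)γ(t)) − exp(−(1/2)(σ²(ξ)+σ²(η))γ(t)) ). Then for all t ≥ 0 and ξ, η ∈ ℝ²: C(t,ξ,η) = −κ(‖ξ‖²+‖η‖²) ∫₀^t C(s,ξ,η) ds − (1/2) σ²(ξ−η)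 ∫₀^t C(s,ξ,η) g(s) ds + ρ(ξ,η) ∫₀^t e(s,ξ) \overline{e(s,η)} g(s) ds. -/
/-!
Both `C(s,ξ,η)` and `e(s,ξ) conj(e(s,η))` are `θ₀(ξ) conj(θ₀(η))` times a damping factor
`F_b(s) = exp(-(a s + b γ(s)))`, with `a = κ(‖ξ‖² + ‖η‖²)` and `b = σ²(ξ-η)/2`, resp.
`b = (σ²(ξ) + σ²(η))/2`. As `γ` is the primitive of an integrable function, `F_b` is absolutely
continuous with `F_b' = -(a + b g) F_b` almost everywhere, so the fundamental theorem of calculus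
gives `F_b(t) - 1 = -a ∫₀^t F_b - b ∫₀^t F_b g`. Subtracting the two instances and using
`(σ²(ξ) + σ²(η) - σ²(ξ-η))/2 = ρ(ξ,η)` yields the closed equation.
-/

open MeasureTheory Set Filter Topology intervalIntegral

theorem AbsolutelyContinuousOnInterval.comp_lipschitzOnWith {X Y : Type*}
    [PseudoMetricSpace X] [PseudoMetricSpace Y] {f : ℝ → X} {φ : X → Y} {a b : ℝ}
    {K : NNReal} {s : Set X} (hf : AbsolutelyContinuousOnInterval f a b)
    (hφ : LipschitzOnWith K φ s) (hfs : MapsTo f (uIcc a b) s) :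
    AbsolutelyContinuousOnInterval (φ ∘ f) a b := by
  have hK : Tendsto (fun E : ℕ × (ℕ → ℝ × ℝ) ↦
      K * ∑ i ∈ Finset.range E.1, dist (f (E.2 i).1) (f (E.2 i).2))
      (totalLengthFilter ⊓ 𝓟 (disjWithin a b)) (𝓝 0) := by
    simpa only [mul_zero] using Tendsto.const_mul (K : ℝ) hf
  refine squeeze_zero' (Eventually.of_forall fun _ ↦ Finset.sum_nonneg fun _ _ ↦ dist_nonneg) ?_ hK
  filter_upwards [mem_inf_of_right (mem_principal_self _)] with E hE
  rw [Finset.mul_sum]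
  exact Finset.sum_le_sum fun i hi ↦
    hφ.dist_le_mul _ (hfs (hE.1 i hi).1) _ (hfs (hE.1 i hi).2)

theorem AbsolutelyContinuousOnInterval.exp {f : ℝ → ℝ} {a b : ℝ}
    (hf : AbsolutelyContinuousOnInterval f a b) :
    AbsolutelyContinuousOnInterval (fun x ↦ Real.exp (f x)) a b := by
  obtain ⟨M, hM⟩ := hf.exists_bound
  obtain ⟨K, hK⟩ :=
    ((Real.contDiff_exp (n := 1)).contDiffOn (s := Icc (-M) M)).exists_lipschitzOnWith
    (by decide) (convex_Icc _ _) isCompact_Icc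
  exact hf.comp_lipschitzOnWith hK fun x hx ↦ abs_le.1 (hM x hx)

theorem IntervalIntegrable.exp_integral_sub_one {w : ℝ → ℝ} {a b : ℝ}
    (hw : IntervalIntegrable w volume a b) :
    Real.exp (∫ x in a..b, w x) - 1 = ∫ x in a..b, w x * Real.exp (∫ y in a..x, w y) := by
  have hF := (hw.absolutelyContinuousOnInterval_intervalIntegral left_mem_uIcc).exp
  have hFTC := hF.integral_deriv_eq_sub
  rw [integral_same, Real.exp_zero] at hFTC
  rw [← hFTC]
  refine integral_congr_ae ?_
  filter_upwards [hw.ae_hasDerivAt_integral] with x hx hxab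
  rw [((hx (uIoc_subset_uIcc hxab) a left_mem_uIcc).exp).deriv, mul_comm]

theorem sum_inner_sub_sq {ι E : Type*} [NormedAddCommGroup E] [InnerProductSpace ℝ E]
    (s : Finset ι) (v : ι → E) (x y : E) :
    ∑ k ∈ s, inner ℝ (v k) (x - y) ^ 2 = ∑ k ∈ s, inner ℝ (v k) x ^ 2
      + ∑ k ∈ s, inner ℝ (v k) y ^ 2 - 2 * ∑ k ∈ s, inner ℝ (v k) x * inner ℝ (v k) y := by
  simp_rw [inner_sub_right, sub_sq, Finset.mul_sum, ← Finset.sum_add_distrib,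
    ← Finset.sum_sub_distrib]
  exact Finset.sum_congr rfl fun _ _ ↦ by ring

noncomputable def dampingFactor (g : ℝ → ℝ) (a b s : ℝ) : ℝ :=
  Real.exp (-(a * s + b * ∫ u in (0 : ℝ)..s, g u))

section dampingFactor

variable {g : ℝ → ℝ} {t : ℝ}

theorem continuousOn_dampingFactor (hg : IntervalIntegrable g volume 0 t) (a b : ℝ) :
    ContinuousOn (dampingFactor g a b) (uIcc 0 t) := by
  have hprim := continuousOn_primitive_interval' hg left_mem_uIcc
  unfold dampingFactor
  fun_prop

theorem dampingFactor_sub_one (hg : IntervalIntegrable g volume 0 t) (a b : ℝ) :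
    dampingFactor g a b t - 1 = -a * (∫ s in (0 : ℝ)..t, dampingFactor g a b s)
      - b * ∫ s in (0 : ℝ)..t, dampingFactor g a b s * g s := by
  have hprim : ∀ x ∈ uIcc 0 t,
      ∫ y in (0 : ℝ)..x, -(a + b * g y) = -(a * x + b * ∫ y in (0 : ℝ)..x, g y) := by
    intro x hx
    have hgx := hg.mono_set (uIcc_subset_uIcc left_mem_uIcc hx)
    rw [intervalIntegral.integral_neg,
      integral_add intervalIntegrable_const (hgx.const_mul b), intervalIntegral.integral_const,
      intervalIntegral.integral_const_mul, smul_eq_mul, sub_zero, mul_comm x a]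
  have hw : IntervalIntegrable (fun s ↦ -(a + b * g s)) volume 0 t :=
    (intervalIntegrable_const.add (hg.const_mul b)).neg
  have hD : dampingFactor g a b t - 1
      = ∫ x in (0 : ℝ)..t, -(a + b * g x) * dampingFactor g a b x := by
    rw [dampingFactor, ← hprim t right_mem_uIcc, hw.exp_integral_sub_one]
    exact integral_congr fun x hx ↦ by rw [dampingFactor, hprim x hx]
  have hc := continuousOn_dampingFactor hg a b
  rw [hD, ← intervalIntegral.integral_const_mul, ← intervalIntegral.integral_const_mul,
    ← intervalIntegral.integral_sub (hc.intervalIntegrable.const_mul _)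
      ((hg.continuousOn_mul hc).const_mul _)]
  exact integral_congr fun s _ ↦ by ring

theorem dampingFactor_sub_dampingFactor (hg : IntervalIntegrable g volume 0 t) (a b₁ b₂ : ℝ) :
    dampingFactor g a b₁ t - dampingFactor g a b₂ t
      = -a * (∫ s in (0 : ℝ)..t, (dampingFactor g a b₁ s - dampingFactor g a b₂ s))
        - b₁ * (∫ s in (0 : ℝ)..t, (dampingFactor g a b₁ s - dampingFactor g a b₂ s) * g s)
        + (b₂ - b₁) * ∫ s in (0 : ℝ)..t, dampingFactor g a b₂ s * g s := by
  have hD b := continuousOn_dampingFactor hg a b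
  simp_rw [sub_mul]
  rw [intervalIntegral.integral_sub (hD b₁).intervalIntegrable (hD b₂).intervalIntegrable,
    intervalIntegral.integral_sub (hg.continuousOn_mul (hD b₁)) (hg.continuousOn_mul (hD b₂))]
  linear_combination dampingFactor_sub_one hg a b₁ - dampingFactor_sub_one hg a b₂

end dampingFactor

theorem covariance_fourier_modes_closed_equation_general
    {K : Type*} [Fintype K] (κ C0 : ℝ)
    (σ : K → EuclideanSpace ℝ (Fin 2))
    (g : ℝ → ℝ) (hgmeas : Measurable g)
    (hg : ∀ u : ℝ, 0 ≤ u → 0 ≤ g u ∧ g u ≤ C0)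
    (γ : ℝ → ℝ) (hγ : ∀ t : ℝ, γ t = ∫ u in (0:ℝ)..t, g u)
    (θ0 : EuclideanSpace ℝ (Fin 2) → ℂ)
    (e : ℝ → EuclideanSpace ℝ (Fin 2) → ℂ)
    (he : ∀ (t : ℝ) (ξ : EuclideanSpace ℝ (Fin 2)),
      e t ξ = θ0 ξ * Complex.exp
        (Complex.ofReal (-(κ * ‖ξ‖ ^ 2 * t)
          - (1 / 2) * (∑ k, (inner ℝ (σ k) ξ : ℝ) ^ 2) * γ t)))
    (C : ℝ → EuclideanSpace ℝ (Fin 2) → EuclideanSpace ℝ (Fin 2) → ℂ)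
    (hC : ∀ (t : ℝ) (ξ η : EuclideanSpace ℝ (Fin 2)),
      C t ξ η = θ0 ξ * (starRingEnd ℂ) (θ0 η) *
        Complex.exp (Complex.ofReal (-(κ * (‖ξ‖ ^ 2 + ‖η‖ ^ 2) * t))) *
        (Complex.exp (Complex.ofReal
            (-(1 / 2) * (∑ k, (inner ℝ (σ k) (ξ - η) : ℝ) ^ 2) * γ t))
          - Complex.exp (Complex.ofReal
            (-(1 / 2) * ((∑ k, (inner ℝ (σ k) ξ : ℝ) ^ 2)
              + ∑ k, (inner ℝ (σ k) η : ℝ) ^ 2) * γ t)))) :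
    ∀ (t : ℝ), 0 ≤ t → ∀ (ξ η : EuclideanSpace ℝ (Fin 2)),
      C t ξ η =
        -(Complex.ofReal (κ * (‖ξ‖ ^ 2 + ‖η‖ ^ 2))) * (∫ s in (0:ℝ)..t, C s ξ η)
        - (Complex.ofReal ((1 / 2) * ∑ k, (inner ℝ (σ k) (ξ - η) : ℝ) ^ 2)) *
            (∫ s in (0:ℝ)..t, C s ξ η * (g s : ℂ))
        + (Complex.ofReal (∑ k, (inner ℝ (σ k) ξ : ℝ) * (inner ℝ (σ k) η : ℝ))) *
            ∫ s in (0:ℝ)..t, e s ξ * (starRingEnd ℂ) (e s η) * (g s : ℂ) := by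
  intro t ht ξ η
  obtain rfl : γ = fun t ↦ ∫ u in (0 : ℝ)..t, g u := funext hγ
  have hgi : IntervalIntegrable g volume 0 t :=
    (intervalIntegrable_const (c := C0)).mono_fun' hgmeas.aestronglyMeasurable
      (ae_restrict_of_forall_mem measurableSet_uIoc fun s hs ↦ show ‖g s‖ ≤ C0 by
        rw [uIoc_of_le ht] at hs
        obtain ⟨hgs, hgC⟩ := hg s hs.1.le
        rwa [Real.norm_of_nonneg hgs])
  set a := κ * (‖ξ‖ ^ 2 + ‖η‖ ^ 2)
  set b₁ := (1 / 2) * ∑ k, inner ℝ (σ k) (ξ - η) ^ 2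
  set b₂ := (1 / 2) * (∑ k, inner ℝ (σ k) ξ ^ 2 + ∑ k, inner ℝ (σ k) η ^ 2)
  set z := θ0 ξ * (starRingEnd ℂ) (θ0 η)
  have hC_eq s : C s ξ η = z * ↑(dampingFactor g a b₁ s - dampingFactor g a b₂ s) := by
    rw [hC, mul_assoc, mul_sub, ← Complex.exp_add, ← Complex.exp_add]
    simp only [z, dampingFactor, a, b₁, b₂, Complex.ofReal_sub, Complex.ofReal_exp]
    push_cast
    ring_nf
  have he_eq s : e s ξ * (starRingEnd ℂ) (e s η) = z * ↑(dampingFactor g a b₂ s) := by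
    rw [he, he, map_mul, ← Complex.exp_conj, Complex.conj_ofReal, mul_mul_mul_comm,
      ← Complex.exp_add]
    simp only [z, dampingFactor, a, b₂, Complex.ofReal_exp]
    push_cast
    ring_nf
  have hρ : ∑ k, inner ℝ (σ k) ξ * inner ℝ (σ k) η = b₂ - b₁ := by
    simp only [b₁, b₂]
    linear_combination (1 / 2) * sum_inner_sub_sq Finset.univ σ ξ η
  simp_rw [he_eq, hC_eq, mul_assoc z, ← Complex.ofReal_mul, intervalIntegral.integral_const_mul,
    intervalIntegral.integral_ofReal, dampingFactor_sub_dampingFactor hgi a b₁ b₂, hρ]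
  push_cast
  ring

/-- The closed system satisfied by the limiting mean `e` and the limiting covariance `C`
of the Fourier modes of the stochastic transport-diffusion equation with constant
vector fields: with `σ²(ξ) = Σ_k ⟨σ_k,ξ⟩²`, `ρ(ξ,η) = Σ_k ⟨σ_k,ξ⟩⟨σ_k,η⟩`,
`γ(t) = ∫₀^t g` with `0 ≤ g ≤ C₀`, one has
`C(t,ξ,η) = -κ(‖ξ‖²+‖η‖²)∫₀^t C - (1/2)σ²(ξ-η)∫₀^t C g + ρ(ξ,η)∫₀^t e(·,ξ) conj(e(·,η)) g`. -/
theorem covariance_fourier_modes_closed_equation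
    {K : Type*} [Fintype K] (κ C0 : ℝ) (hκ : 0 ≤ κ) (hC0 : 0 ≤ C0)
    (σ : K → EuclideanSpace ℝ (Fin 2))
    (g : ℝ → ℝ) (hgmeas : Measurable g)
    (hg : ∀ u : ℝ, 0 ≤ u → 0 ≤ g u ∧ g u ≤ C0)
    (γ : ℝ → ℝ) (hγ : ∀ t : ℝ, γ t = ∫ u in (0:ℝ)..t, g u)
    (θ0 : EuclideanSpace ℝ (Fin 2) → ℂ)
    (e : ℝ → EuclideanSpace ℝ (Fin 2) → ℂ)
    (he : ∀ (t : ℝ) (ξ : EuclideanSpace ℝ (Fin 2)),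
      e t ξ = θ0 ξ * Complex.exp
        (Complex.ofReal (-(κ * ‖ξ‖ ^ 2 * t)
          - (1 / 2) * (∑ k, (inner ℝ (σ k) ξ : ℝ) ^ 2) * γ t)))
    (C : ℝ → EuclideanSpace ℝ (Fin 2) → EuclideanSpace ℝ (Fin 2) → ℂ)
    (hC : ∀ (t : ℝ) (ξ η : EuclideanSpace ℝ (Fin 2)),
      C t ξ η = θ0 ξ * (starRingEnd ℂ) (θ0 η) *
        Complex.exp (Complex.ofReal (-(κ * (‖ξ‖ ^ 2 + ‖η‖ ^ 2) * t))) *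
        (Complex.exp (Complex.ofReal
            (-(1 / 2) * (∑ k, (inner ℝ (σ k) (ξ - η) : ℝ) ^ 2) * γ t))
          - Complex.exp (Complex.ofReal
            (-(1 / 2) * ((∑ k, (inner ℝ (σ k) ξ : ℝ) ^ 2)
              + ∑ k, (inner ℝ (σ k) η : ℝ) ^ 2) * γ t)))) :
    ∀ (t : ℝ), 0 ≤ t → ∀ (ξ η : EuclideanSpace ℝ (Fin 2)),
      C t ξ η =
        -(Complex.ofReal (κ * (‖ξ‖ ^ 2 + ‖η‖ ^ 2))) * (∫ s in (0:ℝ)..t, C s ξ η)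
        - (Complex.ofReal ((1 / 2) * ∑ k, (inner ℝ (σ k) (ξ - η) : ℝ) ^ 2)) *
            (∫ s in (0:ℝ)..t, C s ξ η * (g s : ℂ))
        + (Complex.ofReal (∑ k, (inner ℝ (σ k) ξ : ℝ) * (inner ℝ (σ k) η : ℝ))) *
            ∫ s in (0:ℝ)..t, e s ξ * (starRingEnd ℂ) (e s η) * (g s : ℂ) :=
  covariance_fourier_modes_closed_equation_general κ C0 σ g hgmeas hg γ hγ θ0 e he C hC
end
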